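/- For hypothesis classes H1, H2 on instance space X and H = H1 · H2 = {h1·h2 : h1 in H1, h2 in H2} (pointwise product of {-1,+1}-valued functions), for every t >= 0 and every depth-t X-valued tree x it holds that |S(H, x)| <= S(H1, t) * S(H2, t), where S(F, t) is the maximum of |S(F, y)| over depth-t trees y. -/

import Mathlib

/-- A depth-`t` `X`-valued tree: a family of maps `x_s : {-1,+1}^(s-1) → X`. -/
def XTree (X : Type*) (t : ℕ) := (s : Fin t) → (Fin s.val → ℤ) → X

/-- A sign path: a sequence with entries in `{-1,+1}`. -/
def IsSignPath {t : ℕ} (ε : Fin t → ℤ) : Prop := ∀ s, ε s = 1 ∨ ε s = -1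

/-- `S(H, x)`: the set of sign paths realized by some hypothesis `h ∈ H` along the tree `x`,
i.e. `ε_s = h (x_s (ε_1, …, ε_{s-1}))` for all `s`. -/
def realizedPaths {X : Type*} (H : Set (X → ℤ)) {t : ℕ} (x : XTree X t) :
    Set (Fin t → ℤ) :=
  {ε | IsSignPath ε ∧ ∃ h ∈ H, ∀ s : Fin t,
    ε s = h (x s (fun i => ε ⟨i.val, i.isLt.trans s.isLt⟩))}

/-- The tree shattering coefficient `S(H, t)`: the maximum of `|S(H, x)|` over
all depth-`t` `X`-valued trees `x`. -/
noncomputable def treeShatter {X : Type*} (H : Set (X → ℤ)) (t : ℕ) : ℕ :=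
  ⨆ x : XTree X t, (realizedPaths H x).ncard

/-!
Let `a` be the root of `x`, `x_σ` the subtree reached by the first sign `σ`, and
`H_σ = {h ∈ H | h a = σ}`. A path realized by `H` on `x` with first sign `σ` is `σ` followed by a
path realized by `H_σ` on `x_σ`, so `|S(H, x)| = |S(H₊, x₊)| + |S(H₋, x₋)|`; grafting maximizing
trees below a common root gives `S(H₊, t) + S(H₋, t) ≤ S(H, t + 1)`. A product `h₁ h₂` has value
`σ = ±1` at `a` exactly when `(h₁ a, h₂ a)` is `(1, σ)` or `(-1, -σ)`, so by induction on `t`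
`|S(H₁ H₂, x)| ≤ Σ_σ (S(H₁₊) S(H₂σ) + S(H₁₋) S(H₂₋σ)) = (S(H₁₊) + S(H₁₋)) (S(H₂₊) + S(H₂₋))`,
which is at most `S(H₁, t + 1) S(H₂, t + 1)`.
-/

open scoped Pointwise

namespace XTree

variable {X : Type*} {t : ℕ}

def root (x : XTree X (t + 1)) : X :=
  x 0 fun i => absurd i.isLt (Nat.not_lt_zero _)

def child (x : XTree X (t + 1)) (σ : ℤ) : XTree X t :=
  fun s e => x s.succ (Fin.cons σ e)

def node (a : X) (y z : XTree X t) : XTree X (t + 1) :=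
  Fin.cases (motive := fun s => (Fin s.val → ℤ) → X) (fun _ => a)
    (fun s (e : Fin (s.val + 1) → ℤ) => if e 0 = 1 then y s (Fin.tail e) else z s (Fin.tail e))

lemma apply_zero_eq_root (x : XTree X (t + 1)) (e : Fin (0 : Fin (t + 1)).val → ℤ) :
    x 0 e = x.root :=
  congrArg (x 0) (funext fun i => absurd i.isLt (Nat.not_lt_zero _))

lemma root_node (a : X) (y z : XTree X t) : (node a y z).root = a := rfl

lemma child_node (a : X) (y z : XTree X t) (σ : ℤ) :
    (node a y z).child σ = if σ = 1 then y else z := by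
  funext s e
  simp only [child, node, Fin.cases_succ, Fin.cons_zero, Fin.tail_cons]
  split_ifs <;> rfl

end XTree

def restrictAt {X : Type*} (H : Set (X → ℤ)) (a : X) (σ : ℤ) : Set (X → ℤ) :=
  {h ∈ H | h a = σ}

section RealizedPaths

variable {X : Type*} {t : ℕ}

lemma setOf_isSignPath_finite (t : ℕ) : {ε : Fin t → ℤ | IsSignPath ε}.Finite :=
  (Set.Finite.pi fun _ => Set.toFinite {(1 : ℤ), -1}).subset fun _ hε s _ => hε s

lemma realizedPaths_finite (H : Set (X → ℤ)) (x : XTree X t) : (realizedPaths H x).Finite :=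
  (setOf_isSignPath_finite t).subset fun _ hε => hε.1

lemma bddAbove_range_ncard_realizedPaths (H : Set (X → ℤ)) (t : ℕ) :
    BddAbove (Set.range fun x : XTree X t => (realizedPaths H x).ncard) :=
  ⟨_, Set.forall_mem_range.2 fun _ =>
    Set.ncard_le_ncard (fun _ hε => hε.1) (setOf_isSignPath_finite t)⟩

lemma ncard_realizedPaths_le_treeShatter (H : Set (X → ℤ)) (x : XTree X t) :
    (realizedPaths H x).ncard ≤ treeShatter H t :=
  le_ciSup (bddAbove_range_ncard_realizedPaths H t) x

lemma exists_ncard_realizedPaths_eq_treeShatter [Nonempty X] (H : Set (X → ℤ)) (t : ℕ) :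
    ∃ x : XTree X t, (realizedPaths H x).ncard = treeShatter H t :=
  have : Nonempty (XTree X t) := ⟨fun _ _ => Classical.arbitrary X⟩
  Nat.sSup_mem (Set.range_nonempty _) (bddAbove_range_ncard_realizedPaths H t)

lemma realizedPaths_union (A B : Set (X → ℤ)) (x : XTree X t) :
    realizedPaths (A ∪ B) x = realizedPaths A x ∪ realizedPaths B x := by
  ext ε
  simp only [realizedPaths, Set.mem_union, Set.mem_ofPred_eq, or_and_right, exists_or, and_or_left]

lemma ncard_realizedPaths_union_le (A B : Set (X → ℤ)) (x : XTree X t) :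
    (realizedPaths (A ∪ B) x).ncard ≤ (realizedPaths A x).ncard + (realizedPaths B x).ncard :=
  realizedPaths_union A B x ▸ Set.ncard_union_le _ _

lemma realizedPaths_mono {A B : Set (X → ℤ)} (hAB : A ⊆ B) (x : XTree X t) :
    realizedPaths A x ⊆ realizedPaths B x :=
  fun _ ⟨hε, h, hA, hx⟩ => ⟨hε, h, hAB hA, hx⟩

open Classical in
lemma ncard_realizedPaths_zero (H : Set (X → ℤ)) (x : XTree X 0) :
    (realizedPaths H x).ncard = if H.Nonempty then 1 else 0 := by
  have : realizedPaths H x = if H.Nonempty then Set.univ else ∅ := by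
    ext ε
    split_ifs with hH <;> simpa [realizedPaths, IsSignPath, Set.Nonempty] using hH
  rw [this]
  split_ifs <;> simp

lemma cons_mem_realizedPaths_iff {H : Set (X → ℤ)} {x : XTree X (t + 1)} {σ : ℤ}
    {ε : Fin t → ℤ} :
    Fin.cons σ ε ∈ realizedPaths H x ↔
      (σ = 1 ∨ σ = -1) ∧ ε ∈ realizedPaths (restrictAt H x.root σ) (x.child σ) := by
  have prefix_succ (s : Fin t) :
      (fun i : Fin s.succ.val =>
        (Fin.cons σ ε : Fin (t + 1) → ℤ) ⟨i.val, i.isLt.trans s.succ.isLt⟩) =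
        Fin.cons σ fun i : Fin s.val => ε ⟨i.val, i.isLt.trans s.isLt⟩ := by
    funext i
    exact Fin.cases rfl (fun _ => rfl) i
  simp only [realizedPaths, restrictAt, Set.mem_ofPred_eq, IsSignPath, Fin.forall_fin_succ,
    Fin.cons_zero, Fin.cons_succ, XTree.child, XTree.apply_zero_eq_root, prefix_succ, and_assoc,
    eq_comm (a := σ)]

lemma realizedPaths_succ (H : Set (X → ℤ)) (x : XTree X (t + 1)) :
    realizedPaths H x =
      Fin.cons 1 '' realizedPaths (restrictAt H x.root 1) (x.child 1) ∪
        Fin.cons (-1) '' realizedPaths (restrictAt H x.root (-1)) (x.child (-1)) := by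
  ext ε
  constructor
  · intro hε
    rw [← Fin.cons_self_tail ε, cons_mem_realizedPaths_iff] at hε
    rcases hε with ⟨h0 | h0, hε⟩ <;> rw [h0] at hε
    · exact .inl ⟨_, hε, by rw [← h0, Fin.cons_self_tail]⟩
    · exact .inr ⟨_, hε, by rw [← h0, Fin.cons_self_tail]⟩
  · rintro (⟨ε, hε, rfl⟩ | ⟨ε, hε, rfl⟩) <;> exact cons_mem_realizedPaths_iff.2 ⟨by simp, hε⟩

lemma ncard_realizedPaths_succ (H : Set (X → ℤ)) (x : XTree X (t + 1)) :
    (realizedPaths H x).ncard =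
      (realizedPaths (restrictAt H x.root 1) (x.child 1)).ncard +
        (realizedPaths (restrictAt H x.root (-1)) (x.child (-1))).ncard := by
  rw [realizedPaths_succ, Set.ncard_union_eq ?_ ((realizedPaths_finite _ _).image _)
    ((realizedPaths_finite _ _).image _),
    Set.ncard_image_of_injective _ (Fin.cons_right_injective _),
    Set.ncard_image_of_injective _ (Fin.cons_right_injective _)]
  refine Set.disjoint_left.2 ?_
  rintro _ ⟨ε, -, rfl⟩ ⟨ε', -, h⟩
  simpa using congrFun h 0

lemma treeShatter_restrictAt_add_le (H : Set (X → ℤ)) (a : X) :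
    treeShatter (restrictAt H a 1) t + treeShatter (restrictAt H a (-1)) t ≤
      treeShatter H (t + 1) := by
  have : Nonempty X := ⟨a⟩
  obtain ⟨y, hy⟩ := exists_ncard_realizedPaths_eq_treeShatter (restrictAt H a 1) t
  obtain ⟨z, hz⟩ := exists_ncard_realizedPaths_eq_treeShatter (restrictAt H a (-1)) t
  have := ncard_realizedPaths_succ H (XTree.node a y z)
  simp only [XTree.root_node, XTree.child_node, ↓reduceIte, Int.reduceNeg, reduceCtorEq] at this
  rw [← hy, ← hz, ← this]
  exact ncard_realizedPaths_le_treeShatter H _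

end RealizedPaths

lemma restrictAt_mul_subset {X : Type*} (H₁ H₂ : Set (X → ℤ)) (a : X) {σ : ℤ} (hσ : IsUnit σ) :
    restrictAt (H₁ * H₂) a σ ⊆
      restrictAt H₁ a 1 * restrictAt H₂ a σ ∪ restrictAt H₁ a (-1) * restrictAt H₂ a (-σ) := by
  rintro _ ⟨⟨h₁, hh₁, h₂, hh₂, rfl⟩, hσa⟩
  simp only [Pi.mul_apply] at hσa
  rcases Int.isUnit_iff.1 (isUnit_of_mul_isUnit_left (hσa ▸ hσ)) with h₁a | h₁a
  · exact .inl ⟨h₁, ⟨hh₁, h₁a⟩, h₂, ⟨hh₂, by simpa [h₁a] using hσa⟩, rfl⟩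
  · exact .inr ⟨h₁, ⟨hh₁, h₁a⟩, h₂, ⟨hh₂, by simp [← hσa, h₁a]⟩, rfl⟩

theorem ncard_realizedPaths_mul_le {X : Type*} {t : ℕ} (H₁ H₂ : Set (X → ℤ)) (x : XTree X t) :
    (realizedPaths (H₁ * H₂) x).ncard ≤ treeShatter H₁ t * treeShatter H₂ t := by
  induction t generalizing H₁ H₂ with
  | zero =>
    rw [ncard_realizedPaths_zero]
    split_ifs with hH
    · have one_le (H : Set (X → ℤ)) (hH : H.Nonempty) : 1 ≤ treeShatter H 0 := by
        simpa [ncard_realizedPaths_zero, hH] using ncard_realizedPaths_le_treeShatter H x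
      exact Nat.mul_le_mul (one_le H₁ hH.of_mul_left) (one_le H₂ hH.of_mul_right)
    · exact Nat.zero_le _
  | succ t ih =>
    set a := x.root
    have restrict_le {σ : ℤ} (hσ : IsUnit σ) (y : XTree X t) :
        (realizedPaths (restrictAt (H₁ * H₂) a σ) y).ncard ≤
          treeShatter (restrictAt H₁ a 1) t * treeShatter (restrictAt H₂ a σ) t +
            treeShatter (restrictAt H₁ a (-1)) t * treeShatter (restrictAt H₂ a (-σ)) t := by
      calc _ ≤ (realizedPaths (restrictAt H₁ a 1 * restrictAt H₂ a σ ∪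
            restrictAt H₁ a (-1) * restrictAt H₂ a (-σ)) y).ncard :=
            Set.ncard_le_ncard (realizedPaths_mono (restrictAt_mul_subset H₁ H₂ a hσ) y)
              (realizedPaths_finite _ _)
        _ ≤ _ := (ncard_realizedPaths_union_le _ _ y).trans (add_le_add (ih _ _ y) (ih _ _ y))
    calc (realizedPaths (H₁ * H₂) x).ncard
        ≤ _ + _ := (ncard_realizedPaths_succ _ x).le
      _ ≤ _ := add_le_add (restrict_le isUnit_one _) (restrict_le isUnit_one.neg _)
      _ = (treeShatter (restrictAt H₁ a 1) t + treeShatter (restrictAt H₁ a (-1)) t) *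
          (treeShatter (restrictAt H₂ a 1) t + treeShatter (restrictAt H₂ a (-1)) t) := by
        rw [neg_neg]; ring
      _ ≤ treeShatter H₁ (t + 1) * treeShatter H₂ (t + 1) :=
        Nat.mul_le_mul (treeShatter_restrictAt_add_le H₁ a) (treeShatter_restrictAt_add_le H₂ a)

theorem stmt10_general {X : Type*} (H1 H2 : Set (X → ℤ))
    (t : ℕ) (x : XTree X t) :
    (realizedPaths {h | ∃ h1 ∈ H1, ∃ h2 ∈ H2, h = fun a => h1 a * h2 a} x).ncard ≤
      treeShatter H1 t * treeShatter H2 t := by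
  have : {h | ∃ h1 ∈ H1, ∃ h2 ∈ H2, h = fun a => h1 a * h2 a} = H1 * H2 := by
    ext h
    simp only [Set.mem_mul, Set.mem_ofPred_eq, eq_comm (a := h)]
    rfl
  rw [this]
  exact ncard_realizedPaths_mul_le H1 H2 x

theorem stmt10 {X : Type*} (H1 H2 : Set (X → ℤ))
    (hs1 : ∀ h ∈ H1, ∀ a : X, h a = 1 ∨ h a = -1)
    (hs2 : ∀ h ∈ H2, ∀ a : X, h a = 1 ∨ h a = -1)
    (t : ℕ) (x : XTree X t) :
    (realizedPaths {h | ∃ h1 ∈ H1, ∃ h2 ∈ H2, h = fun a => h1 a * h2 a} x).ncard ≤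
      treeShatter H1 t * treeShatter H2 t :=
  stmt10_general H1 H2 t x
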